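/- arXiv:math/0506379 — 3 statements merged into one kernel-verified Lean document; each statement's English description precedes it below -/
import Mathlib

section
/- Let Y be a second countable topological space and Z a nonempty Baire space. Then a subset A of Y is residual in Y if and only if A × Z is residual in the product space Y × Z. -/
/-!
Pulling back along the open continuous projection `Y × Z → Y` preserves residual sets. Conversely,
for a dense open `U ⊆ Y × Z` and a nonempty basic open `b ⊆ Y`, the projection of `U ∩ (b × Z)` to
`Z` is dense open; intersecting over the countably many basic sets, residually many `z` have a dense
slice `{y | (y, z) ∈ U}`. Hence if `A × Z` is residual, residually many slices of it are residual,
and every such slice is `A`; the Baire property of `Z` guarantees that such a `z` exists.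
-/

open Set Filter TopologicalSpace

section Slices

variable {Y Z : Type*} [TopologicalSpace Y] [TopologicalSpace Z]

instance residual_neBot [Nonempty Z] [BaireSpace Z] : (residual Z).NeBot :=
  ⟨fun h => by simpa using (dense_of_mem_residual (empty_mem_iff_bot.2 h)).nonempty⟩

theorem dense_image_snd_inter_prod_univ {U : Set (Y × Z)} (hU : Dense U) {b : Set Y}
    (hb : IsOpen b) (hbne : b.Nonempty) : Dense (Prod.snd '' (U ∩ b ×ˢ univ)) := by
  refine dense_iff_inter_open.2 fun W hW hWne => ?_
  obtain ⟨⟨y, z⟩, ⟨hyb, hzW⟩, hyzU⟩ := hU.inter_open_nonempty _ (hb.prod hW) (hbne.prod hWne)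
  exact ⟨z, hzW, ⟨(y, z), ⟨hyzU, hyb, trivial⟩, rfl⟩⟩

theorem eventually_residual_dense_slice [SecondCountableTopology Y] {U : Set (Y × Z)}
    (hUo : IsOpen U) (hUd : Dense U) : ∀ᶠ z in residual Z, Dense ((·, z) ⁻¹' U) := by
  have hproj : ∀ᶠ z in residual Z, ∀ b ∈ countableBasis Y, b.Nonempty →
      z ∈ Prod.snd '' (U ∩ b ×ˢ univ) := by
    refine (eventually_countable_ball (countable_countableBasis Y)).2 fun b hb => ?_
    by_cases hbne : b.Nonempty
    · have hbo := isOpen_of_mem_countableBasis hb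
      filter_upwards [residual_of_dense_open (isOpenMap_snd _ (hUo.inter (hbo.prod isOpen_univ)))
        (dense_image_snd_inter_prod_univ hUd hbo hbne)] with z hz _ using hz
    · exact Eventually.of_forall fun _ h => absurd h hbne
  filter_upwards [hproj] with z hz
  refine (isBasis_countableBasis Y).dense_iff.2 fun b hb hbne => ?_
  obtain ⟨⟨y, _⟩, ⟨hyzU, hyb, -⟩, rfl⟩ := hz b hb hbne
  exact ⟨y, hyb, hyzU⟩

theorem eventually_residual_slice_mem_residual [SecondCountableTopology Y] {s : Set (Y × Z)}
    (hs : s ∈ residual (Y × Z)) : ∀ᶠ z in residual Z, (·, z) ⁻¹' s ∈ residual Y := by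
  obtain ⟨S, hSo, hSd, hSc, hSs⟩ := mem_residual_iff.1 hs
  filter_upwards [(eventually_countable_ball hSc).2 fun U hU =>
    eventually_residual_dense_slice (hSo U hU) (hSd U hU)] with z hz
  refine mem_of_superset ((countable_bInter_mem hSc).2 fun U hU =>
    residual_of_dense_open ((hSo U hU).preimage (.prodMk_left z)) (hz U hU)) ?_
  exact fun y hy => hSs (mem_sInter.2 fun U hU => mem_iInter₂.1 hy U hU)

end Slices

/-- Let `Y` be a second countable topological space and `Z` a nonempty
Baire space. Then a subset `A` of `Y` is residual in `Y` if and only if `A × Z` is residual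
in the product space `Y × Z`. -/
theorem stmt_1 (Y Z : Type*) [TopologicalSpace Y] [TopologicalSpace Z]
    [SecondCountableTopology Y] [Nonempty Z] [BaireSpace Z] (A : Set Y) :
    A ∈ residual Y ↔ (A ×ˢ (Set.univ : Set Z)) ∈ residual (Y × Z) := by
  constructor
  · intro hA
    rw [prod_univ]
    exact tendsto_residual_of_isOpenMap continuous_fst isOpenMap_fst hA
  · intro hA
    have hslice : ∀ z : Z, (·, z) ⁻¹' (A ×ˢ (univ : Set Z)) = A := fun z => by ext; simp
    simpa only [hslice, eventually_const] using eventually_residual_slice_mem_residual hA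
end

section
/- Let Y be a second countable topological space, Z a nonempty Baire space, and A a subset of Y. If A × Z is meagre in the product space Y × Z, then A is meagre in Y. -/
open Set TopologicalSpace

lemma isNowhereDense_isMeagre {X : Type*} [TopologicalSpace X] {s : Set X}
    (hs : IsNowhereDense s) : IsMeagre s := by
  rw [isMeagre_iff_countable_union_isNowhereDense]
  exact ⟨{s}, by simpa using hs, countable_singleton s, by simp⟩

/-- Let `Y` be a second countable topological space, `Z` a nonempty Baire
space, and `A` a subset of `Y`. If `A × Z` is meagre in the product space `Y × Z`, then `A`
is meagre in `Y`. -/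
theorem stmt_3 (Y Z : Type*) [TopologicalSpace Y] [TopologicalSpace Z]
    [SecondCountableTopology Y] [Nonempty Z] [BaireSpace Z] (A : Set Y)
    (h : IsMeagre (A ×ˢ (Set.univ : Set Z))) : IsMeagre A := by
  -- trivial case: Y empty
  rcases isEmpty_or_nonempty Y with hY | hY
  · have : A = ∅ := Set.eq_empty_of_isEmpty A
    rw [this]; exact IsMeagre.empty
  -- get a sequence of dense open sets whose intersection avoids A × Z
  rw [IsMeagre, mem_residual_iff] at h
  obtain ⟨S, hSo, hSd, hSc, hSsub⟩ := h
  obtain ⟨f, hf⟩ : ∃ f : ℕ → Set (Y × Z), insert univ S = range f :=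
    ((hSc.insert univ).exists_eq_range (insert_nonempty _ _))
  have hfo : ∀ n, IsOpen (f n) := by
    intro n
    have : f n ∈ insert univ S := hf ▸ mem_range_self n
    rcases this with h1 | h1
    · rw [h1]; exact isOpen_univ
    · exact hSo _ h1
  have hfd : ∀ n, Dense (f n) := by
    intro n
    have : f n ∈ insert univ S := hf ▸ mem_range_self n
    rcases this with h1 | h1
    · rw [h1]; exact dense_univ
    · exact hSd _ h1
  have hfsub : (⋂ n, f n) ⊆ (A ×ˢ (univ : Set Z))ᶜ := by
    refine subset_trans ?_ hSsub
    intro x hx t ht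
    have : t ∈ insert univ S := mem_insert_of_mem _ ht
    rw [hf] at this
    obtain ⟨n, rfl⟩ := this
    exact mem_iInter.mp hx n
  -- countable basis of Y, with `univ` inserted to make it nonempty
  obtain ⟨b, hbc, hbne, hbb⟩ := exists_countable_basis Y
  obtain ⟨V, hV⟩ : ∃ V : ℕ → Set Y, insert univ b = range V :=
    ((hbc.insert univ).exists_eq_range (insert_nonempty _ _))
  have hVo : ∀ k, IsOpen (V k) := by
    intro k
    have : V k ∈ insert univ b := hV ▸ mem_range_self k
    rcases this with h1 | h1
    · rw [h1]; exact isOpen_univ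
    · exact hbb.isOpen h1
  have hVne : ∀ k, (V k).Nonempty := by
    intro k
    have : V k ∈ insert univ b := hV ▸ mem_range_self k
    rcases this with h1 | h1
    · rw [h1]; exact univ_nonempty
    · exact nonempty_iff_ne_empty.mpr fun he => hbne (he ▸ h1)
  have hVbasis : ∀ (y : Y) (O : Set Y), IsOpen O → y ∈ O → ∃ k, y ∈ V k ∧ V k ⊆ O := by
    intro y O hO hy
    obtain ⟨v, hvb, hyv, hvO⟩ := hbb.exists_subset_of_mem_open hy hO
    have : v ∈ insert univ b := mem_insert_of_mem _ hvb
    rw [hV] at this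
    obtain ⟨k, rfl⟩ := this
    exact ⟨k, hyv, hvO⟩
  -- argue by contradiction
  classical
  by_contra hA
  -- the union of the basic sets on which A is meagre
  set g : ℕ → Set Y := fun k => if IsMeagre (A ∩ V k) then A ∩ V k else ∅ with hg
  have hgm : IsMeagre (⋃ k, g k) := by
    refine isMeagre_iUnion fun k => ?_
    by_cases hk : IsMeagre (A ∩ V k) <;> simp [hg, hk, IsMeagre.empty]
  set W : Set Y := ⋃ k ∈ {k | IsMeagre (A ∩ V k)}, V k with hW
  have hWo : IsOpen W := isOpen_biUnion fun k _ => hVo k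
  have hAW : A ∩ W ⊆ ⋃ k, g k := by
    rintro y ⟨hyA, hyW⟩
    simp only [hW, mem_iUnion, mem_setOf_eq] at hyW
    obtain ⟨k, hk, hyk⟩ := hyW
    exact mem_iUnion.mpr ⟨k, by simp [hg, hk, hyA, hyk]⟩
  -- U := complement of closure of W; it is nonempty
  set U : Set Y := (closure W)ᶜ with hU
  have hUo : IsOpen U := isClosed_closure.isOpen_compl
  have hUne : U.Nonempty := by
    by_contra hUe
    rw [not_nonempty_iff_eq_empty, hU, compl_empty_iff] at hUe
    -- then W is dense, and A ⊆ (A ∩ W) ∪ Wᶜ with Wᶜ nowhere dense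
    have hWc : IsNowhereDense Wᶜ := by
      rw [IsNowhereDense, hWo.isClosed_compl.closure_eq, interior_compl, hUe, compl_univ]
    have : IsMeagre ((⋃ k, g k) ∪ Wᶜ) := by
      rw [IsMeagre, compl_union]
      exact Filter.inter_mem hgm (isNowhereDense_isMeagre hWc)
    refine hA (this.mono ?_)
    intro y hy
    by_cases hyW : y ∈ W
    · exact Or.inl (hAW ⟨hy, hyW⟩)
    · exact Or.inr hyW
  -- on any basic set inside U, A is non-meagre
  have hUkey : ∀ k, V k ⊆ U → ¬ IsMeagre (A ∩ V k) := by
    intro k hkU hk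
    have : V k ⊆ W := subset_biUnion_of_mem (u := fun k => V k) hk
    obtain ⟨y, hy⟩ := hVne k
    exact (hkU hy) (subset_closure (this hy))
  -- the dense open subsets of Z
  set O : ℕ × ℕ → Set Z := fun p =>
    if (V p.2 ∩ U).Nonempty then {z | ∃ y ∈ V p.2 ∩ U, (y, z) ∈ f p.1} else univ with hO
  have hOo : ∀ p, IsOpen (O p) := by
    rintro ⟨n, k⟩
    by_cases hne : (V k ∩ U).Nonempty
    · have : O (n, k) = Prod.snd '' (((V k ∩ U) ×ˢ (univ : Set Z)) ∩ f n) := by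
        ext z
        simp only [hO, hne, if_pos, mem_setOf_eq, mem_image, mem_inter_iff, mem_prod, mem_univ,
          and_true]
        constructor
        · rintro ⟨y, hy, hyz⟩; exact ⟨(y, z), ⟨hy, hyz⟩, rfl⟩
        · rintro ⟨⟨y, z'⟩, ⟨hy, hyz⟩, rfl⟩; exact ⟨y, hy, hyz⟩
      rw [this]
      exact isOpenMap_snd _ ((((hVo k).inter hUo).prod isOpen_univ).inter (hfo n))
    · simp only [hO, hne, if_neg, if_false]; exact isOpen_univ
  have hOd : ∀ p, Dense (O p) := by
    rintro ⟨n, k⟩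
    by_cases hne : (V k ∩ U).Nonempty
    · intro z
      rw [mem_closure_iff]
      intro o ho hzo
      have hprod : ((V k ∩ U) ×ˢ o).Nonempty := hne.prod ⟨z, hzo⟩
      have hprodo : IsOpen ((V k ∩ U) ×ˢ o) := ((hVo k).inter hUo).prod ho
      obtain ⟨⟨y, z'⟩, hmem, hfmem⟩ := (hfd n).inter_open_nonempty _ hprodo hprod
      exact ⟨z', hmem.2, by simp only [hO, hne, if_pos, mem_setOf_eq]; exact ⟨y, hmem.1, hfmem⟩⟩
    · simp only [hO, hne, if_neg, if_false]; exact dense_univ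
  -- pick a point in the intersection
  obtain ⟨z₀, hz₀⟩ : (⋂ p, O p).Nonempty :=
    (dense_iInter_of_isOpen hOo hOd).nonempty
  have hz₀' : ∀ n k, (V k ∩ U).Nonempty → ∃ y ∈ V k ∩ U, (y, z₀) ∈ f n := by
    intro n k hne
    have := mem_iInter.mp hz₀ (n, k)
    simpa only [hO, hne, if_pos, mem_setOf_eq] using this
  -- the sections E n
  set E : ℕ → Set Y := fun n => U ∩ {y | (y, z₀) ∈ f n} with hE
  have hEo : ∀ n, IsOpen (E n) :=
    fun n => hUo.inter ((hfo n).preimage (Continuous.prodMk_left z₀))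
  -- E n is dense in U
  have hEd : ∀ n (y : Y), y ∈ U → ∀ N : Set Y, IsOpen N → y ∈ N → (E n ∩ N).Nonempty := by
    intro n y hyU N hN hyN
    obtain ⟨k, hyk, hkN⟩ := hVbasis y (N ∩ U) (hN.inter hUo) ⟨hyN, hyU⟩
    have hne : (V k ∩ U).Nonempty := ⟨y, hyk, (hkN hyk).2⟩
    obtain ⟨y', hy', hfy'⟩ := hz₀' n k hne
    exact ⟨y', ⟨hy'.2, hfy'⟩, (hkN hy'.1).1⟩
  -- U \ E n is nowhere dense
  have hnwd : ∀ n, IsNowhereDense (U \ E n) := by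
    intro n
    rw [IsNowhereDense, eq_empty_iff_forall_notMem]
    intro y hy
    have hyc : y ∈ closure (U \ E n) := interior_subset hy
    have hio : IsOpen (interior (closure (U \ E n))) := isOpen_interior
    -- interior of the closure meets U \ E n
    obtain ⟨y₁, hy₁⟩ : ((U \ E n) ∩ interior (closure (U \ E n))).Nonempty := by
      have := mem_closure_iff.mp hyc _ hio hy
      obtain ⟨y₁, h1, h2⟩ := this
      exact ⟨y₁, h2, h1⟩
    -- pick a point of E n in this open set
    obtain ⟨y₂, hy₂E, hy₂i⟩ := hEd n y₁ hy₁.1.1 _ hio hy₁.2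
    -- then E n ∩ interior (...) is open nonempty, so meets U \ E n : contradiction
    have hopen : IsOpen (E n ∩ interior (closure (U \ E n))) := (hEo n).inter hio
    have hsub : E n ∩ interior (closure (U \ E n)) ⊆ closure (U \ E n) :=
      (inter_subset_right).trans interior_subset
    obtain ⟨y₃, h3, h4⟩ := mem_closure_iff.mp (hsub ⟨hy₂E, hy₂i⟩) _ hopen ⟨hy₂E, hy₂i⟩
    exact h4.2 h3.1
  -- A ∩ U ∩ ⋂ E n must be empty (else contradiction with h)
  have hAEempty : A ∩ U ∩ ⋂ n, E n = ∅ := by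
    rw [eq_empty_iff_forall_notMem]
    rintro y ⟨⟨hyA, _⟩, hyE⟩
    have : (y, z₀) ∈ ⋂ n, f n := mem_iInter.mpr fun n => (mem_iInter.mp hyE n).2
    exact hfsub this ⟨hyA, mem_univ _⟩
  -- hence A ∩ U is meagre
  have hAUm : IsMeagre (A ∩ U) := by
    have hsub : A ∩ U ⊆ ⋃ n, (U \ E n) := by
      intro y hy
      by_contra hyn
      simp only [mem_iUnion, not_exists, mem_diff, not_and, not_not] at hyn
      have hyE : y ∈ ⋂ n, E n := mem_iInter.mpr fun n => hyn n hy.2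
      exact eq_empty_iff_forall_notMem.mp hAEempty y ⟨hy, hyE⟩
    exact (isMeagre_iUnion fun n => isNowhereDense_isMeagre (hnwd n)).mono hsub
  -- but A ∩ U is non-meagre: contradiction
  obtain ⟨y, hyU⟩ := hUne
  obtain ⟨k, hyk, hkU⟩ := hVbasis y U hUo hyU
  exact hUkey k hkU (hAUm.mono (inter_subset_inter_right A hkU))
end

section
/- Let (X,ρ) be a metric space, s̃ ∈ (0,1), and b, b̃ positive integers. Let L₁ ⊆ L₂ ⊆ ⋯ ⊆ L_b be finite subsets of X such that any two distinct points of L_b have distance at least 3s̃. Let L̃₁, …, L̃_{b̃} be pairwise disjoint subsets of X with ⋃_{n=1}^{b̃} L̃_n = L_b. Let K₁, …, K_{b̃} be finite subsets of X with Hausdorff distance d(K_n, L̃_n) ≤ s̃ for each n = 1, …, b̃. Then every point x ∈ ⋃_{j=1}^{b̃} K_j has a unique point p(x) ∈ L_b with ρ(x, p(x)) ≤ s̃ (its parent), and if for n = 1, …, b one defines K̃_n = { x ∈ ⋃_{j=1}^{b̃} K_j : p(x) ∈ L_n }, then the Hausdorff distance satisfies d(K̃_n, L_n) ≤ s̃ for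 every n = 1, …, b. -/
open Metric

open scoped Classical in
/-- The Hausdorff distance between subsets of a metric space, with the convention that
`hDist A ∅ = hDist ∅ A = 1` whenever `A` is nonempty. -/
noncomputable def hDist {X : Type*} [MetricSpace X] (A B : Set X) : ℝ :=
  if A.Nonempty ↔ B.Nonempty then Metric.hausdorffDist A B else 1

/-!
Since `L_b` is `3s'`-separated, a point lies within `s'` of at most one point of `L_b`. The
Hausdorff bounds on the pieces, together with `⋃ L'ₙ = L_b`, put every point of `⋃ Kⱼ` within `s'`
of `L_b` and vice versa. Hence a point of `⋃ Kⱼ` within `s'` of `y ∈ Lₙ` has parent `y`, which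
gives the Hausdorff bound between `Lₙ` and the points whose parent lies in `Lₙ`.
-/

section

variable {X : Type*} [MetricSpace X]

lemma hDist_comm (A B : Set X) : hDist A B = hDist B A := by
  unfold hDist
  by_cases h : A.Nonempty ↔ B.Nonempty
  · rw [if_pos h, if_pos h.symm, hausdorffDist_comm]
  · rw [if_neg h, if_neg (fun h' => h h'.symm)]

/-- Boundedness excludes the junk value `hausdorffDist A B = 0` at infinite Hausdorff
edistance. -/
lemma exists_dist_le_of_hDist_le {A B : Set X} {r : ℝ} (hr : r < 1) (hA : Bornology.IsBounded A)
    (hB : IsCompact B) (h : hDist A B ≤ r) {x : X} (hx : x ∈ A) : ∃ y ∈ B, dist x y ≤ r := by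
  unfold hDist at h
  split_ifs at h with hne
  · have hB_ne : B.Nonempty := hne.mp ⟨x, hx⟩
    have hfin : hausdorffEDist A B ≠ ⊤ :=
      hausdorffEDist_ne_top_of_nonempty_of_bounded ⟨x, hx⟩ hB_ne hA hB.isBounded
    obtain ⟨y, hy, hxy⟩ := hB.exists_infDist_eq_dist hB_ne x
    exact ⟨y, hy, hxy ▸ (infDist_le_hausdorffDist_of_mem hx hfin).trans h⟩
  · linarith

lemma hDist_le_of_forall_exists_dist_le {A B : Set X} {r : ℝ} (hr : 0 ≤ r)
    (hAB : ∀ x ∈ A, ∃ y ∈ B, dist x y ≤ r) (hBA : ∀ y ∈ B, ∃ x ∈ A, dist y x ≤ r) :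
    hDist A B ≤ r := by
  have hne : A.Nonempty ↔ B.Nonempty :=
    ⟨fun ⟨x, hx⟩ => (hAB x hx).imp fun _ h => h.1, fun ⟨y, hy⟩ => (hBA y hy).imp fun _ h => h.1⟩
  unfold hDist
  rw [if_pos hne]
  exact hausdorffDist_le_of_mem_dist hr hAB hBA

lemma eq_of_dist_le_of_pairwise_three_mul_le {L : Set X} {s : ℝ}
    (hL : L.Pairwise fun y z => 3 * s ≤ dist y z) {x y z : X} (hy : y ∈ L) (hz : z ∈ L)
    (hxy : dist x y ≤ s) (hxz : dist x z ≤ s) : y = z := by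
  by_contra hne
  have hsep := hL hy hz hne
  have htri := dist_triangle_left y z x
  have hpos := dist_pos.mpr hne
  linarith

lemma hDist_setOf_mem_parent_le {S L N : Set X} {s : ℝ} {p : X → X} (hs : 0 ≤ s)
    (hL : L.Pairwise fun y z => 3 * s ≤ dist y z) (hN : N ⊆ L)
    (hp : ∀ x ∈ S, p x ∈ L ∧ dist x (p x) ≤ s) (hNS : ∀ y ∈ N, ∃ x ∈ S, dist y x ≤ s) :
    hDist {x ∈ S | p x ∈ N} N ≤ s := by
  refine hDist_le_of_forall_exists_dist_le hs (fun x hx => ⟨p x, hx.2, (hp x hx.1).2⟩) ?_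
  intro y hy
  obtain ⟨x, hxS, hyx⟩ := hNS y hy
  have hpx : p x = y := eq_of_dist_le_of_pairwise_three_mul_le hL (hp x hxS).1 (hN hy)
    (hp x hxS).2 (by rwa [dist_comm])
  exact ⟨x, ⟨hxS, hpx ▸ hy⟩, hyx⟩

end

theorem stmt_6_general {X : Type*} [MetricSpace X] (s' : ℝ) (hs : s' ∈ Set.Ioo (0:ℝ) 1)
    (b b' : ℕ) (hb : 0 < b)
    (L : ℕ → Set X)
    (hLfin : ∀ n, 1 ≤ n → n ≤ b → (L n).Finite)
    (hLmono : ∀ m n, 1 ≤ m → m ≤ n → n ≤ b → L m ⊆ L n)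
    (hLsep : ∀ x ∈ L b, ∀ y ∈ L b, x ≠ y → 3 * s' ≤ dist x y)
    (L' : ℕ → Set X)
    (hcover : (⋃ n ∈ Set.Icc 1 b', L' n) = L b)
    (K : ℕ → Set X)
    (hKfin : ∀ n, 1 ≤ n → n ≤ b' → (K n).Finite)
    (hdK : ∀ n, 1 ≤ n → n ≤ b' → hDist (K n) (L' n) ≤ s') :
    (∀ x ∈ ⋃ j ∈ Set.Icc 1 b', K j, ∃! y, y ∈ L b ∧ dist x y ≤ s') ∧
    ∀ p : X → X, (∀ x ∈ ⋃ j ∈ Set.Icc 1 b', K j, p x ∈ L b ∧ dist x (p x) ≤ s') →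
      ∀ n, 1 ≤ n → n ≤ b →
        hDist {x ∈ ⋃ j ∈ Set.Icc 1 b', K j | p x ∈ L n} (L n) ≤ s' := by
  obtain ⟨hs0, hs1⟩ := hs
  have hL'fin : ∀ j ∈ Set.Icc 1 b', (L' j).Finite := fun j hj =>
    (hLfin b hb le_rfl).subset (hcover ▸ Set.subset_biUnion_of_mem hj)
  have hKL : ∀ x ∈ ⋃ j ∈ Set.Icc 1 b', K j, ∃ y ∈ L b, dist x y ≤ s' := by
    simp only [Set.mem_iUnion]
    rintro x ⟨j, hj, hx⟩
    obtain ⟨y, hy, hxy⟩ := exists_dist_le_of_hDist_le hs1 (hKfin j hj.1 hj.2).isBounded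
      (hL'fin j hj).isCompact (hdK j hj.1 hj.2) hx
    exact ⟨y, hcover ▸ Set.mem_biUnion hj hy, hxy⟩
  have hLK : ∀ y ∈ L b, ∃ x ∈ ⋃ j ∈ Set.Icc 1 b', K j, dist y x ≤ s' := by
    rw [← hcover]
    simp only [Set.mem_iUnion]
    rintro y ⟨j, hj, hy⟩
    obtain ⟨x, hx, hyx⟩ := exists_dist_le_of_hDist_le hs1 (hL'fin j hj).isBounded
      (hKfin j hj.1 hj.2).isCompact (hDist_comm (K j) (L' j) ▸ hdK j hj.1 hj.2) hy
    exact ⟨x, ⟨j, hj, hx⟩, hyx⟩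
  refine ⟨fun x hx => ?_, fun p hp n hn hnb => ?_⟩
  · obtain ⟨y, hy, hxy⟩ := hKL x hx
    exact ⟨y, ⟨hy, hxy⟩, fun z hz => eq_of_dist_le_of_pairwise_three_mul_le hLsep hz.1 hy hz.2 hxy⟩
  · have hLn := hLmono n b hn hnb le_rfl
    exact hDist_setOf_mem_parent_le hs0.le hLsep hLn hp fun y hy => hLK y (hLn hy)

/-- Let `(X,ρ)` be a metric space, `s' ∈ (0,1)` (written `s̃` in the
paper), and `b, b'` positive integers. Let `L₁ ⊆ ⋯ ⊆ L_b` be finite subsets of `X` such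
that any two distinct points of `L_b` have distance at least `3s'`. Let `L'₁, …, L'_{b'}`
(written `L̃ₙ`) be pairwise disjoint subsets of `X` with `⋃ₙ L'ₙ = L_b`, and
`K₁, …, K_{b'}` finite subsets with Hausdorff distance `d(Kₙ, L'ₙ) ≤ s'`. Then every
`x ∈ ⋃ⱼ Kⱼ` has a unique parent `p(x) ∈ L_b` with `ρ(x, p(x)) ≤ s'`, and defining
`K'ₙ = {x ∈ ⋃ⱼ Kⱼ : p(x) ∈ Lₙ}` one has `d(K'ₙ, Lₙ) ≤ s'` for `n = 1, …, b`. -/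
theorem stmt_6 {X : Type*} [MetricSpace X] (s' : ℝ) (hs : s' ∈ Set.Ioo (0:ℝ) 1)
    (b b' : ℕ) (hb : 0 < b) (hb' : 0 < b')
    (L : ℕ → Set X)
    (hLfin : ∀ n, 1 ≤ n → n ≤ b → (L n).Finite)
    (hLmono : ∀ m n, 1 ≤ m → m ≤ n → n ≤ b → L m ⊆ L n)
    (hLsep : ∀ x ∈ L b, ∀ y ∈ L b, x ≠ y → 3 * s' ≤ dist x y)
    (L' : ℕ → Set X)
    (hdisj : ∀ m n, 1 ≤ m → m < n → n ≤ b' → Disjoint (L' m) (L' n))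
    (hcover : (⋃ n ∈ Set.Icc 1 b', L' n) = L b)
    (K : ℕ → Set X)
    (hKfin : ∀ n, 1 ≤ n → n ≤ b' → (K n).Finite)
    (hdK : ∀ n, 1 ≤ n → n ≤ b' → hDist (K n) (L' n) ≤ s') :
    (∀ x ∈ ⋃ j ∈ Set.Icc 1 b', K j, ∃! y, y ∈ L b ∧ dist x y ≤ s') ∧
    ∀ p : X → X, (∀ x ∈ ⋃ j ∈ Set.Icc 1 b', K j, p x ∈ L b ∧ dist x (p x) ≤ s') →
      ∀ n, 1 ≤ n → n ≤ b →
        hDist {x ∈ ⋃ j ∈ Set.Icc 1 b', K j | p x ∈ L n} (L n) ≤ s' :=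
  stmt_6_general s' hs b b' hb L hLfin hLmono hLsep L' hcover K hKfin hdK
end
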